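/- Let g : (X, τ_X) → (Y, τ_Y) be a mapping between strongly locally spectral spaces. Then the following are equivalent: (1) g is spectral, i.e. g is bounded (every A ∈ CO(X) satisfies g(A) ⊆ B for some B ∈ CO(Y)) and s-continuous (g⁻¹(D) ∈ ICO(X) for every D ∈ ICO(Y)); (2) g is bounded and locally spectral, i.e. for all A ∈ CO(X) and B ∈ CO(Y) with g(A) ⊆ B, the restriction g : A → B is a spectral mapping between spectral spaces (preimages under it of compact open subsets of B are compact open in A). -/

import Mathlib

open Set TopologicalSpace Topology

/-- The family of compact open subsets of a topological space. -/
def CO (X : Type*) [TopologicalSpace X] : Set (Set X) := {U | IsCompact U ∧ IsOpen U}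

/-- A spectral space: compact, T0, sober, the compact open sets form a basis and are
closed under binary intersections. -/
def IsSpectralTopSpace (X : Type*) [TopologicalSpace X] : Prop :=
  CompactSpace X ∧ T0Space X ∧ QuasiSober X ∧
    TopologicalSpace.IsTopologicalBasis (CO X) ∧
    ∀ U ∈ CO X, ∀ V ∈ CO X, U ∩ V ∈ CO X

/-- The family of open subsets of `X` that are spectral spaces in the subspace
topology. -/
def SO (X : Type*) [TopologicalSpace X] : Set (Set X) :=
  {U | IsOpen U ∧ IsSpectralTopSpace ↥U}

/-- A strongly locally spectral space: locally spectral (the open spectral subspaces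
cover `X`) and semispectral (the intersection of two compact open sets is compact). -/
def StronglyLocallySpectral (X : Type*) [TopologicalSpace X] : Prop :=
  ⋃₀ SO X = Set.univ ∧ ∀ U ∈ CO X, ∀ V ∈ CO X, IsCompact (U ∩ V)

/-- The family of intersection compact open subsets. -/
def ICO (X : Type*) [TopologicalSpace X] : Set (Set X) :=
  {V | IsOpen V ∧ ∀ A ∈ CO X, IsCompact (V ∩ A)}

/-!
Through the open embeddings `A ↪ X` and `B ↪ Y`, the compact open subsets of `B` are exactly
the compact open subsets of `Y` contained in `B`, and the restriction `g : A → B` pulls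
`B ∩ D` back to `A ∩ g⁻¹(D)`. So both conditions amount to `A ∩ g⁻¹(D)` being compact open
for `A ∈ CO(X)` and `D` ranging over `CO(Y)`, resp. `ICO(Y)`; these agree because in a
semispectral space `CO ⊆ ICO` and an ICO set cuts a compact open set in a compact open set.
Openness of `g⁻¹(D)` then follows since the spectral open subspaces, being compact, cover `X`.
-/

section CompactOpen

variable {X : Type*} [TopologicalSpace X]

theorem image_val_mem_CO_iff {A : Set X} (hA : IsOpen A) (W : Set A) :
    Subtype.val '' W ∈ CO X ↔ W ∈ CO A :=
  IsEmbedding.subtypeVal.isCompact_iff.symm.and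
    hA.isOpenEmbedding_subtypeVal.isOpen_iff_image_isOpen.symm

theorem preimage_val_mem_CO_iff {A : Set X} (hA : IsOpen A) (S : Set X) :
    (Subtype.val ⁻¹' S : Set A) ∈ CO A ↔ A ∩ S ∈ CO X := by
  rw [← image_val_mem_CO_iff hA, Subtype.image_preimage_coe]

theorem inter_mem_CO_of_mem_ICO {A D : Set X} (hA : A ∈ CO X) (hD : D ∈ ICO X) :
    A ∩ D ∈ CO X :=
  ⟨inter_comm D A ▸ hD.2 A hA, hA.2.inter hD.1⟩

theorem CO_subset_ICO (hX : ∀ U ∈ CO X, ∀ V ∈ CO X, IsCompact (U ∩ V)) : CO X ⊆ ICO X :=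
  fun U hU => ⟨hU.2, fun V hV => hX U hU V hV⟩

theorem SO_subset_CO : SO X ⊆ CO X :=
  fun _ hU => ⟨isCompact_iff_compactSpace.2 hU.2.1, hU.1⟩

theorem sUnion_CO_eq_univ (hX : ⋃₀ SO X = univ) : ⋃₀ CO X = univ :=
  univ_subset_iff.1 (hX ▸ sUnion_mono SO_subset_CO)

theorem isOpen_of_forall_inter_CO (hX : ⋃₀ CO X = univ) {S : Set X}
    (hS : ∀ A ∈ CO X, IsOpen (A ∩ S)) : IsOpen S := by
  refine isOpen_iff_forall_mem_open.2 fun x hx => ?_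
  obtain ⟨A, hA, hxA⟩ : x ∈ ⋃₀ CO X := hX ▸ mem_univ x
  exact ⟨A ∩ S, inter_subset_right, hS A hA, hxA, hx⟩

end CompactOpen

theorem Set.MapsTo.restrict_preimage_preimage_val {X Y : Type*} {g : X → Y} {A : Set X}
    {B : Set Y} (h : MapsTo g A B) (D : Set Y) :
    h.restrict g A B ⁻¹' (Subtype.val ⁻¹' D) = Subtype.val ⁻¹' (g ⁻¹' D) :=
  rfl

/-- STATEMENT 12: A map `g` between strongly locally spectral spaces is spectral
(bounded and s-continuous: preimages of ICO sets are ICO) iff it is bounded and locally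
spectral (each restriction `g : A → B`, for `A ∈ CO(X)`, `B ∈ CO(Y)` with `g(A) ⊆ B`,
pulls compact open subsets of `B` back to compact open subsets of `A`). -/
theorem spectralMap_iff_bounded_locallySpectral {X Y : Type*}
    [TopologicalSpace X] [TopologicalSpace Y]
    (hX : StronglyLocallySpectral X) (hY : StronglyLocallySpectral Y) (g : X → Y) :
    ((∀ A ∈ CO X, ∃ B ∈ CO Y, g '' A ⊆ B) ∧ ∀ D ∈ ICO Y, g ⁻¹' D ∈ ICO X) ↔
      ((∀ A ∈ CO X, ∃ B ∈ CO Y, g '' A ⊆ B) ∧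
        ∀ A ∈ CO X, ∀ B ∈ CO Y, ∀ h : Set.MapsTo g A B,
          ∀ W ∈ CO ↥B, (Set.MapsTo.restrict g A B h) ⁻¹' W ∈ CO ↥A) := by
  refine and_congr_right fun hbdd => ⟨fun hICO A hA B hB h W hW => ?_, fun hloc D hD => ?_⟩
  · have hD : Subtype.val '' W ∈ ICO Y :=
      CO_subset_ICO hY.2 ((image_val_mem_CO_iff hB.2 W).2 hW)
    rw [← Subtype.val_injective.preimage_image W, h.restrict_preimage_preimage_val,
      preimage_val_mem_CO_iff hA.2]
    exact inter_mem_CO_of_mem_ICO hA (hICO _ hD)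
  · have hinter : ∀ A ∈ CO X, A ∩ g ⁻¹' D ∈ CO X := fun A hA => by
      obtain ⟨B, hB, hAB⟩ := hbdd A hA
      have h : MapsTo g A B := mapsTo_iff_image_subset.2 hAB
      have hW : (Subtype.val ⁻¹' D : Set B) ∈ CO B :=
        (preimage_val_mem_CO_iff hB.2 D).2 (inter_mem_CO_of_mem_ICO hB hD)
      rw [← preimage_val_mem_CO_iff hA.2, ← h.restrict_preimage_preimage_val]
      exact hloc A hA B hB h _ hW
    refine ⟨isOpen_of_forall_inter_CO (sUnion_CO_eq_univ hX.1) fun A hA => (hinter A hA).2,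
      fun A hA => ?_⟩
    rw [inter_comm]
    exact (hinter A hA).1
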